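/- Let R and B be finite disjoint sets of points in ℝ^d. Suppose that for every subset S ⊆ R ∪ B with at most d+2 points, the set S ∩ R can be strictly separated from S ∩ B by a hyperplane. Then R can be strictly separated from B by a hyperplane. -/

import Mathlib

/-!
The pairs `(u, t)` with `⟪u, a⟫ < t` for `a ∈ R` and `t < ⟪u, b⟫` for `b ∈ B` form an intersection
of open half-spaces of `ℝ^d × ℝ`, one for each point of `R ∪ B`. These are convex sets in a space
of dimension `d + 1`, so by Helly's theorem they have a common point as soon as any `d + 2` of them
do, which is the hypothesis. The normal `u` found this way can vanish only if `R` or `B` is empty,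
and then any nonzero vector gives a separating hyperplane.
-/

open scoped Classical

/-- `A` and `B` are strictly separated by a hyperplane. -/
def StrictlySeparated {d : ℕ} (A B : Set (EuclideanSpace ℝ (Fin d))) : Prop :=
  ∃ u : EuclideanSpace ℝ (Fin d), u ≠ 0 ∧ ∃ t : ℝ,
    (∀ a ∈ A, (inner ℝ u a : ℝ) < t) ∧ (∀ b ∈ B, t < (inner ℝ u b : ℝ))

open Module Finset RealInnerProductSpace

section SeparatingParams

variable {E : Type*} [NormedAddCommGroup E] [InnerProductSpace ℝ E]

def separatingParams (A B : Set E) : Set (E × ℝ) :=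
  {x | (∀ a ∈ A, ⟪x.1, a⟫ < x.2) ∧ ∀ b ∈ B, x.2 < ⟪x.1, b⟫}

theorem convex_separatingParams (A B : Set E) : Convex ℝ (separatingParams A B) := by
  have hlin (p : E) : IsLinearMap ℝ fun x : E × ℝ => ⟪x.1, p⟫ - x.2 :=
    ⟨fun x y => by simp only [Prod.fst_add, Prod.snd_add, inner_add_left]; ring,
     fun c x => by
      simp only [Prod.smul_fst, Prod.smul_snd, real_inner_smul_left, smul_eq_mul]
      ring⟩
  have hA := convex_iInter₂ fun a (_ : a ∈ A) => convex_halfSpace_lt (hlin a) 0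
  have hB := convex_iInter₂ fun b (_ : b ∈ B) => convex_halfSpace_gt (hlin b) 0
  have hAB : separatingParams A B =
      (⋂ a ∈ A, {x | ⟪x.1, a⟫ - x.2 < 0}) ∩ ⋂ b ∈ B, {x | 0 < ⟪x.1, b⟫ - x.2} := by
    ext x
    simp [separatingParams]
  exact hAB ▸ hA.inter hB

theorem biInter_separatingParams (S A B : Set E) :
    ⋂ p ∈ S, separatingParams ({p} ∩ A) ({p} ∩ B) = separatingParams (S ∩ A) (S ∩ B) := by
  ext x
  simp only [separatingParams, Set.mem_iInter, Set.mem_ofPred_eq, Set.mem_inter_iff,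
    Set.mem_singleton_iff]
  grind

theorem exists_forall_inner_lt {A : Set E} (hA : A.Finite) (v : E) : ∃ t, ∀ a ∈ A, ⟪v, a⟫ < t := by
  obtain ⟨m, hm⟩ := (hA.image fun a => ⟪v, a⟫).bddAbove
  exact ⟨m + 1, fun a ha => (hm ⟨a, ha, rfl⟩).trans_lt (lt_add_one m)⟩

theorem exists_forall_lt_inner {B : Set E} (hB : B.Finite) (v : E) : ∃ t, ∀ b ∈ B, t < ⟪v, b⟫ := by
  obtain ⟨m, hm⟩ := (hB.image fun b => ⟪v, b⟫).bddBelow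
  exact ⟨m - 1, fun b hb => (sub_one_lt m).trans_le (hm ⟨b, hb, rfl⟩)⟩

theorem separatingParams_nonempty_of_forall_card_le [FiniteDimensional ℝ E] [DecidableEq E]
    {R B : Finset E}
    (h : ∀ S ⊆ R ∪ B, #S ≤ finrank ℝ E + 2 →
      (separatingParams (↑(S ∩ R) : Set E) ↑(S ∩ B)).Nonempty) :
    (separatingParams (R : Set E) B).Nonempty := by
  have hdim : finrank ℝ (E × ℝ) = finrank ℝ E + 1 := by simp [finrank_prod]
  have hinter (S : Finset E) : ⋂ p ∈ S, separatingParams ({p} ∩ (R : Set E)) ({p} ∩ B) =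
      separatingParams (↑(S ∩ R) : Set E) ↑(S ∩ B) := by
    rw [coe_inter, coe_inter, ← biInter_separatingParams, set_biInter_coe]
  have hall := Convex.helly_theorem' (s := R ∪ B) (fun _ _ => convex_separatingParams _ _)
    fun S hS hcard => (hinter S).symm ▸ h S hS (by omega)
  rwa [hinter, union_inter_cancel_right, union_inter_cancel_left] at hall

end SeparatingParams

theorem StrictlySeparated.separatingParams_nonempty {d : ℕ}
    {A B : Set (EuclideanSpace ℝ (Fin d))} (h : StrictlySeparated A B) :
    (separatingParams A B).Nonempty := by
  obtain ⟨u, -, t, hA, hB⟩ := h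
  exact ⟨(u, t), hA, hB⟩

theorem strictlySeparated_of_separatingParams_nonempty {d : ℕ}
    {A B : Set (EuclideanSpace ℝ (Fin d))} (hA : A.Finite) (hB : B.Finite)
    {v : EuclideanSpace ℝ (Fin d)} (hv : v ≠ 0) (h : (separatingParams A B).Nonempty) :
    StrictlySeparated A B := by
  obtain ⟨⟨u, t⟩, hAu, hBu⟩ := h
  rcases ne_or_eq u 0 with hu | rfl
  · exact ⟨u, hu, t, hAu, hBu⟩
  rcases A.eq_empty_or_nonempty with rfl | ⟨a, ha⟩
  · obtain ⟨s, hs⟩ := exists_forall_lt_inner hB v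
    exact ⟨v, hv, s, by simp, hs⟩
  · obtain rfl : B = ∅ := Set.eq_empty_of_forall_notMem fun b hb => by
      have := (hAu a ha).trans (hBu b hb)
      simp at this
    obtain ⟨s, hs⟩ := exists_forall_inner_lt hA v
    exact ⟨v, hv, s, hs, by simp⟩

theorem kirchberger_general (d : ℕ) (R B : Finset (EuclideanSpace ℝ (Fin d)))
    (h : ∀ S : Finset (EuclideanSpace ℝ (Fin d)), S ⊆ R ∪ B → S.card ≤ d + 2 →
      StrictlySeparated ((S ∩ R : Finset (EuclideanSpace ℝ (Fin d))) :
          Set (EuclideanSpace ℝ (Fin d)))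
        ((S ∩ B : Finset (EuclideanSpace ℝ (Fin d))) : Set (EuclideanSpace ℝ (Fin d)))) :
    StrictlySeparated (R : Set (EuclideanSpace ℝ (Fin d)))
      (B : Set (EuclideanSpace ℝ (Fin d))) := by
  obtain ⟨v, hv, -⟩ := h ∅ (empty_subset _) (by simp)
  refine strictlySeparated_of_separatingParams_nonempty R.finite_toSet B.finite_toSet hv ?_
  refine separatingParams_nonempty_of_forall_card_le fun S hS hcard =>
    (h S hS ?_).separatingParams_nonempty
  simpa [finrank_euclideanSpace] using hcard

/-- **Kirchberger's theorem**. -/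
theorem kirchberger (d : ℕ) (R B : Finset (EuclideanSpace ℝ (Fin d))) (hRB : Disjoint R B)
    (h : ∀ S : Finset (EuclideanSpace ℝ (Fin d)), S ⊆ R ∪ B → S.card ≤ d + 2 →
      StrictlySeparated ((S ∩ R : Finset (EuclideanSpace ℝ (Fin d))) :
          Set (EuclideanSpace ℝ (Fin d)))
        ((S ∩ B : Finset (EuclideanSpace ℝ (Fin d))) : Set (EuclideanSpace ℝ (Fin d)))) :
    StrictlySeparated (R : Set (EuclideanSpace ℝ (Fin d)))
      (B : Set (EuclideanSpace ℝ (Fin d))) :=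
  kirchberger_general d R B h
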